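/- arXiv:2402.08667 — 4 statements merged into one kernel-verified Lean document; each statement's English description precedes it below -/
import Mathlib

section
/- Target Score Identity (additive noise): for every y ∈ ℝ^d, the gradient of log p_Y satisfies ∇ log p_Y(y) = ∫ ∇ log p_X(x) · p_{X|Y}(x|y) dx, where the integral is over ℝ^d. -/
/-!
Translating `y` by `h` inside `p_Y(y) = ∫ p_X(x) p_W(y - x) dx` can be moved onto `x`:
`p_Y(y + h) - p_Y(y) = ∫ (p_X(x + h) - p_X(x)) p_W(y - x) dx`. Writing `p_X(x + h) - p_X(x)` as a
line integral of `∇p_X` and exchanging the integrals (the domination hypothesis makes this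
legitimate) gives `p_Y(y + h) - p_Y(y) = ∫₀¹ ⟪Φ(y + t h), h⟫ dt` with
`Φ(y) = ∫ p_W(y - x) ∇p_X(x) dx`, which is continuous by dominated convergence; hence `∇p_Y = Φ`,
and the identity follows from `∇ log p = p⁻¹ ∇p` for `p_Y` and `p_X`.

Integrability of `x ↦ p_X(x) p_W(y - x)` at every `y`, not only almost every one, comes from the
same increment identity: it holds at some `y₀` close to `y`, and the increment from `y₀` to `y` is
integrable.
-/

open MeasureTheory Real Filter Topology Set
open scoped RealInnerProductSpace

section Gradient

variable {E : Type*} [NormedAddCommGroup E] [InnerProductSpace ℝ E] [CompleteSpace E]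

theorem ContDiff.continuous_gradient {f : E → ℝ} (hf : ContDiff ℝ 1 f) :
    Continuous (gradient f) :=
  (InnerProductSpace.toDual ℝ E).symm.continuous.comp (hf.continuous_fderiv one_ne_zero)

theorem HasGradientAt.log {f : E → ℝ} {f' x : E} (hf : HasGradientAt f f' x) (hx : f x ≠ 0) :
    HasGradientAt (fun y => Real.log (f y)) ((f x)⁻¹ • f') x := by
  rw [hasGradientAt_iff_hasFDerivAt, map_smul]
  exact hf.hasFDerivAt.log hx

theorem ContDiff.sub_eq_intervalIntegral_inner_gradient {f : E → ℝ} (hf : ContDiff ℝ 1 f)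
    (x v : E) : f (x + v) - f x = ∫ t in (0 : ℝ)..1, ⟪gradient f (x + t • v), v⟫ := by
  have hderiv (t : ℝ) :
      HasDerivAt (fun s : ℝ => f (x + s • v)) ⟪gradient f (x + t • v), v⟫ t := by
    have hline : HasDerivAt (fun s : ℝ => x + s • v) v t := by
      simpa using ((hasDerivAt_id t).smul_const v).const_add x
    exact ((hf.differentiable one_ne_zero) _).hasGradientAt.hasFDerivAt.comp_hasDerivAt t hline
  have hcont : Continuous fun t : ℝ => ⟪gradient f (x + t • v), v⟫ := by
    have := hf.continuous_gradient
    fun_prop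
  simpa using (intervalIntegral.integral_eq_sub_of_hasDerivAt (fun t _ => hderiv t)
    (hcont.intervalIntegrable 0 1)).symm

theorem hasGradientAt_of_sub_eq_intervalIntegral {p : E → ℝ} {Φ : E → E} {y : E}
    (hΦ : Continuous Φ)
    (hp : ∀ᶠ h in 𝓝 0, p (y + h) - p y = ∫ t in (0 : ℝ)..1, ⟪Φ (y + t • h), h⟫) :
    HasGradientAt p (Φ y) y := by
  rw [hasGradientAt_iff_isLittleO_nhds_zero, Asymptotics.isLittleO_iff]
  intro c hc
  obtain ⟨δ, hδ, hΦδ⟩ := Metric.continuousAt_iff.mp (hΦ.continuousAt (x := y)) c hc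
  filter_upwards [hp, Metric.ball_mem_nhds (0 : E) hδ] with h hph hh
  rw [mem_ball_zero_iff] at hh
  have hclose : ∀ t ∈ uIoc (0 : ℝ) 1, ‖⟪Φ (y + t • h) - Φ y, h⟫‖ ≤ c * ‖h‖ := by
    intro t ht
    rw [uIoc_of_le zero_le_one] at ht
    have hdist : dist (y + t • h) y < δ := by
      rw [dist_eq_norm, add_sub_cancel_left, norm_smul, norm_of_nonneg ht.1.le]
      nlinarith [norm_nonneg h, ht.2]
    calc ‖⟪Φ (y + t • h) - Φ y, h⟫‖ ≤ ‖Φ (y + t • h) - Φ y‖ * ‖h‖ := norm_inner_le_norm _ _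
      _ ≤ c * ‖h‖ := by
        gcongr
        rw [← dist_eq_norm]
        exact (hΦδ hdist).le
  have hint : IntervalIntegrable (fun t : ℝ => ⟪Φ (y + t • h), h⟫) volume 0 1 := by
    apply Continuous.intervalIntegrable
    fun_prop
  calc ‖p (y + h) - p y - ⟪Φ y, h⟫‖ = ‖∫ t in (0 : ℝ)..1, ⟪Φ (y + t • h) - Φ y, h⟫‖ := by
        simp_rw [hph, inner_sub_left]
        rw [intervalIntegral.integral_sub hint intervalIntegrable_const]
        simp
    _ ≤ c * ‖h‖ * |1 - 0| := intervalIntegral.norm_integral_le_of_norm_le_const hclose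
    _ = c * ‖h‖ := by simp

end Gradient

section Convolution

variable {E : Type*} [NormedAddCommGroup E] [InnerProductSpace ℝ E] [FiniteDimensional ℝ E]
  [MeasurableSpace E] [BorelSpace E] {μ : Measure E} {f k G : E → ℝ}

theorem integrable_smul_gradient_of_le (hf : ContDiff ℝ 1 f) (hk : Continuous k)
    (hk0 : ∀ x, 0 ≤ k x) (hG : Integrable G μ) {y : E}
    (hdom : ∀ x, ‖gradient f x‖ * k (y - x) ≤ G x) :
    Integrable (fun x => k (y - x) • gradient f x) μ := by
  have := hf.continuous_gradient
  refine hG.mono' (by fun_prop) (ae_of_all _ fun x => ?_)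
  rw [norm_smul, norm_of_nonneg (hk0 _), mul_comm]
  exact hdom x

theorem continuousAt_integral_smul_gradient (hf : ContDiff ℝ 1 f) (hk : Continuous k)
    (hk0 : ∀ x, 0 ≤ k x) (hG : Integrable G μ) {y : E} {ε : ℝ} (hε : 0 < ε)
    (hdom : ∀ y', dist y' y < ε → ∀ x, ‖gradient f x‖ * k (y' - x) ≤ G x) :
    ContinuousAt (fun y' => ∫ x, k (y' - x) • gradient f x ∂μ) y := by
  have := hf.continuous_gradient
  refine continuousAt_of_dominated
    (Eventually.of_forall fun _ => (by fun_prop : Continuous _).aestronglyMeasurable) ?_ hG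
    (ae_of_all _ fun x => by fun_prop)
  filter_upwards [Metric.ball_mem_nhds y hε] with y' hy'
  refine ae_of_all _ fun x => ?_
  rw [norm_smul, norm_of_nonneg (hk0 _), mul_comm]
  exact hdom y' hy' x

variable [SFinite μ] [μ.IsAddRightInvariant]

theorem integrable_inner_gradient_mul_prod (hf : ContDiff ℝ 1 f) (hk : Continuous k)
    (hk0 : ∀ x, 0 ≤ k x) (hG : Integrable G μ) {y v : E}
    (hseg : ∀ t ∈ Icc (0 : ℝ) 1, ∀ x, ‖gradient f x‖ * k (y + t • v - x) ≤ G x) :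
    Integrable (fun p : ℝ × E => ⟪gradient f (p.2 + p.1 • v), v⟫ * k (y - p.2))
      ((volume.restrict (Ioc 0 1)).prod μ) := by
  have := hf.continuous_gradient
  have hbound : ∀ t ∈ Ioc (0 : ℝ) 1, ∀ x,
      ‖⟪gradient f (x + t • v), v⟫ * k (y - x)‖ ≤ ‖v‖ * G (x + t • v) := by
    intro t ht x
    have hshift : y + t • v - (x + t • v) = y - x := by abel
    calc ‖⟪gradient f (x + t • v), v⟫ * k (y - x)‖
        ≤ ‖gradient f (x + t • v)‖ * ‖v‖ * k (y - x) := by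
          rw [norm_mul, norm_of_nonneg (hk0 _)]
          gcongr
          · exact hk0 _
          · exact norm_inner_le_norm (𝕜 := ℝ) _ _
      _ = ‖v‖ * (‖gradient f (x + t • v)‖ * k (y + t • v - (x + t • v))) := by
          rw [hshift]; ring
      _ ≤ ‖v‖ * G (x + t • v) := by
          gcongr
          exact hseg t (Ioc_subset_Icc_self ht) _
  have hmeas : AEStronglyMeasurable
      (fun p : ℝ × E => ⟪gradient f (p.2 + p.1 • v), v⟫ * k (y - p.2))
      ((volume.restrict (Ioc 0 1)).prod μ) :=
    (by fun_prop : Continuous _).aestronglyMeasurable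
  refine (integrable_prod_iff hmeas).2 ⟨?_, ?_⟩
  · rw [ae_restrict_iff' measurableSet_Ioc]
    refine ae_of_all _ fun t ht => ?_
    refine ((hG.comp_add_right (t • v)).const_mul ‖v‖).mono'
      (by fun_prop : Continuous _).aestronglyMeasurable (ae_of_all _ (hbound t ht))
  · refine Integrable.mono' (g := fun _ => ‖v‖ * ∫ x, G x ∂μ)
      (integrableOn_const measure_Ioc_lt_top.ne) hmeas.norm.integral_prod_right' ?_
    rw [ae_restrict_iff' measurableSet_Ioc]
    refine ae_of_all _ fun t ht => ?_
    rw [norm_of_nonneg (integral_nonneg fun _ => norm_nonneg _)]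
    calc ∫ x, ‖⟪gradient f (x + t • v), v⟫ * k (y - x)‖ ∂μ
        ≤ ∫ x, ‖v‖ * G (x + t • v) ∂μ :=
          integral_mono_of_nonneg (ae_of_all _ fun _ => norm_nonneg _)
            ((hG.comp_add_right (t • v)).const_mul ‖v‖) (ae_of_all _ (hbound t ht))
      _ = ‖v‖ * ∫ x, G x ∂μ := by rw [integral_const_mul, integral_add_right_eq_self]

theorem integrable_and_integral_sub_mul_eq_intervalIntegral (hf : ContDiff ℝ 1 f) (hk : Continuous k)
    (hk0 : ∀ x, 0 ≤ k x) (hG : Integrable G μ) {y v : E}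
    (hseg : ∀ t ∈ Icc (0 : ℝ) 1, ∀ x, ‖gradient f x‖ * k (y + t • v - x) ≤ G x) :
    Integrable (fun x => (f (x + v) - f x) * k (y - x)) μ ∧
      ∫ x, (f (x + v) - f x) * k (y - x) ∂μ
        = ∫ t in (0 : ℝ)..1, ⟪∫ x, k (y + t • v - x) • gradient f x ∂μ, v⟫ := by
  have hprod := integrable_inner_gradient_mul_prod hf hk hk0 hG hseg
  have hftc : (fun x => (f (x + v) - f x) * k (y - x))
      = fun x => ∫ t in Ioc (0 : ℝ) 1, ⟪gradient f (x + t • v), v⟫ * k (y - x) := by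
    ext x
    rw [hf.sub_eq_intervalIntegral_inner_gradient, ← intervalIntegral.integral_mul_const,
      intervalIntegral.integral_of_le zero_le_one]
  have hslice : ∀ t ∈ Ioc (0 : ℝ) 1, ∫ x, ⟪gradient f (x + t • v), v⟫ * k (y - x) ∂μ
      = ⟪∫ x, k (y + t • v - x) • gradient f x ∂μ, v⟫ := by
    intro t ht
    have hint := integrable_smul_gradient_of_le hf hk hk0 hG (hseg t (Ioc_subset_Icc_self ht))
    rw [real_inner_comm, ← integral_inner hint]
    conv_rhs => rw [← integral_add_right_eq_self _ (t • v)]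
    congr 1 with x
    rw [real_inner_smul_right, add_sub_add_right_eq_sub, real_inner_comm, mul_comm]
  refine ⟨hftc ▸ hprod.integral_prod_right, ?_⟩
  rw [hftc, integral_integral_swap (f := fun x t => ⟪gradient f (x + t • v), v⟫ * k (y - x))
    hprod.swap, intervalIntegral.integral_of_le zero_le_one]
  exact setIntegral_congr_fun measurableSet_Ioc hslice

theorem integrable_mul_sub_of_dominated [μ.IsOpenPosMeasure] (hf : ContDiff ℝ 1 f)
    (hk : Continuous k) (hk0 : ∀ x, 0 ≤ k x) (hfi : Integrable f μ) (hki : Integrable k μ)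
    (hG : Integrable G μ) {y : E} {ε : ℝ} (hε : 0 < ε)
    (hdom : ∀ y', dist y' y < ε → ∀ x, ‖gradient f x‖ * k (y' - x) ≤ G x) :
    Integrable (fun x => f x * k (y - x)) μ := by
  have hae : ∀ᵐ y' ∂μ, Integrable (fun x => f x * k (y' - x)) μ :=
    hfi.ae_convolution_exists (L := ContinuousLinearMap.mul ℝ ℝ) hki
  obtain ⟨y₀, hy₀, hint₀⟩ := Measure.exists_mem_of_measure_ne_zero_of_ae
    (Metric.isOpen_ball.measure_ne_zero μ (Metric.nonempty_ball.2 hε)) (ae_restrict_of_ae hae)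
  have hseg : ∀ t ∈ Icc (0 : ℝ) 1, ∀ x, ‖gradient f x‖ * k (y₀ + t • (y - y₀) - x) ≤ G x :=
    fun t ht => hdom _ ((convex_ball y ε).add_smul_sub_mem hy₀ (Metric.mem_ball_self hε) ht)
  have hint := ((integrable_and_integral_sub_mul_eq_intervalIntegral hf hk hk0 hG hseg).1.add
    hint₀).comp_sub_right (y - y₀)
  refine hint.congr (ae_of_all _ fun x => ?_)
  simp only [Pi.add_apply, sub_add_cancel, sub_mul]
  rw [show y₀ - (x - (y - y₀)) = y - x by abel]

theorem hasGradientAt_integral_mul_sub [μ.IsOpenPosMeasure] (hf : ContDiff ℝ 1 f)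
    (hk : Continuous k) (hk0 : ∀ x, 0 ≤ k x) (hfi : Integrable f μ) (hki : Integrable k μ)
    (hdom : ∀ y, ∃ ε > 0, ∃ G : E → ℝ, Integrable G μ ∧
      ∀ y', dist y' y < ε → ∀ x, ‖gradient f x‖ * k (y' - x) ≤ G x) (y : E) :
    HasGradientAt (fun y' => ∫ x, f x * k (y' - x) ∂μ) (∫ x, k (y - x) • gradient f x ∂μ) y := by
  have hconv (y' : E) : Integrable (fun x => f x * k (y' - x)) μ := by
    obtain ⟨ε, hε, G, hG, hdom'⟩ := hdom y'
    exact integrable_mul_sub_of_dominated hf hk hk0 hfi hki hG hε hdom'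
  have hcont : Continuous fun y' => ∫ x, k (y' - x) • gradient f x ∂μ :=
    continuous_iff_continuousAt.2 fun y' => by
      obtain ⟨ε, hε, G, hG, hdom'⟩ := hdom y'
      exact continuousAt_integral_smul_gradient hf hk hk0 hG hε hdom'
  obtain ⟨ε, hε, G, hG, hdomy⟩ := hdom y
  refine hasGradientAt_of_sub_eq_intervalIntegral hcont ?_
  filter_upwards [Metric.ball_mem_nhds (0 : E) hε] with h hh
  have hseg : ∀ t ∈ Icc (0 : ℝ) 1, ∀ x, ‖gradient f x‖ * k (y + t • h - x) ≤ G x := by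
    intro t ht
    have hyh : y + h ∈ Metric.ball y ε := by simpa using hh
    simpa using hdomy _ ((convex_ball y ε).add_smul_sub_mem (Metric.mem_ball_self hε) hyh ht)
  have hshift : Integrable (fun x => f (x + h) * k (y - x)) μ := by
    simpa only [add_sub_add_right_eq_sub] using (hconv (y + h)).comp_add_right h
  calc ∫ x, f x * k (y + h - x) ∂μ - ∫ x, f x * k (y - x) ∂μ
      = ∫ x, (f (x + h) - f x) * k (y - x) ∂μ := by
        rw [← integral_add_right_eq_self _ h]
        simp_rw [add_sub_add_right_eq_sub]
        rw [← integral_sub hshift (hconv y)]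
        simp_rw [sub_mul]
    _ = _ := (integrable_and_integral_sub_mul_eq_intervalIntegral hf hk hk0 hG hseg).2

end Convolution

theorem target_score_identity_general
    (d : ℕ)
    (pX pW : EuclideanSpace ℝ (Fin d) → ℝ)
    (hpX_pos : ∀ x, 0 < pX x) (hpW_pos : ∀ w, 0 < pW w)
    (hpX_diff : ContDiff ℝ 1 pX) (hpW_diff : ContDiff ℝ 1 pW)
    (hpX_prob : ∫ x, pX x = 1) (hpW_prob : ∫ w, pW w = 1)
    (pY : EuclideanSpace ℝ (Fin d) → ℝ)
    (hpY : ∀ y, pY y = ∫ x, pX x * pW (y - x))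
    (pXgY : EuclideanSpace ℝ (Fin d) → EuclideanSpace ℝ (Fin d) → ℝ)
    (hpXgY : ∀ x y, pXgY x y = pX x * pW (y - x) / pY y)
    (hDom : ∀ y, ∃ ε > 0, ∃ g : EuclideanSpace ℝ (Fin d) → ℝ, Integrable g ∧
      ∀ y', dist y' y < ε → ∀ x, ‖gradient pX x‖ * pW (y' - x) ≤ g x) :
    ∀ y, gradient (fun y' => Real.log (pY y')) y
      = ∫ x, pXgY x y • gradient (fun x' => Real.log (pX x')) x := by
  intro y
  have hWc := hpW_diff.continuous
  have hW0 (w : EuclideanSpace ℝ (Fin d)) : 0 ≤ pW w := (hpW_pos w).le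
  have hXi : Integrable pX := .of_integral_ne_zero (by rw [hpX_prob]; exact one_ne_zero)
  have hWi : Integrable pW := .of_integral_ne_zero (by rw [hpW_prob]; exact one_ne_zero)
  have hgradY : HasGradientAt pY (∫ x, pW (y - x) • gradient pX x) y := by
    rw [show pY = _ from funext hpY]
    exact hasGradientAt_integral_mul_sub hpX_diff hWc hW0 hXi hWi hDom y
  have hpYpos : 0 < pY y := by
    obtain ⟨ε, hε, G, hG, hdom⟩ := hDom y
    rw [hpY]
    exact integral_pos_of_integrable_nonneg_nonzero (x := 0)
      (hpX_diff.continuous.mul (by fun_prop))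
      (integrable_mul_sub_of_dominated hpX_diff hWc hW0 hXi hWi hG hε hdom)
      (fun x => (mul_pos (hpX_pos x) (hpW_pos _)).le) (mul_pos (hpX_pos 0) (hpW_pos _)).ne'
  have hgradlogX (x) : gradient (fun x' => Real.log (pX x')) x = (pX x)⁻¹ • gradient pX x :=
    ((hpX_diff.differentiable one_ne_zero x).hasGradientAt.log (hpX_pos x).ne').gradient
  rw [(hgradY.log hpYpos.ne').gradient, ← integral_smul]
  refine integral_congr_ae (ae_of_all _ fun x => ?_)
  simp only [hgradlogX, hpXgY, smul_smul]
  congr 1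
  field_simp [(hpX_pos x).ne']

/-- **Target Score Identity** (additive noise model `Y = X + W`):
for every `y`, `∇ log p_Y(y) = ∫ ∇ log p_X(x) p_{X|Y}(x|y) dx`. -/
theorem target_score_identity
    (d : ℕ) (hd : 1 ≤ d)
    (pX pW : EuclideanSpace ℝ (Fin d) → ℝ)
    (hpX_pos : ∀ x, 0 < pX x) (hpW_pos : ∀ w, 0 < pW w)
    (hpX_diff : ContDiff ℝ 1 pX) (hpW_diff : ContDiff ℝ 1 pW)
    (hpX_prob : ∫ x, pX x = 1) (hpW_prob : ∫ w, pW w = 1)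
    (pY : EuclideanSpace ℝ (Fin d) → ℝ)
    (hpY : ∀ y, pY y = ∫ x, pX x * pW (y - x))
    (pXgY : EuclideanSpace ℝ (Fin d) → EuclideanSpace ℝ (Fin d) → ℝ)
    (hpXgY : ∀ x y, pXgY x y = pX x * pW (y - x) / pY y)
    (hInt : ∀ y, Integrable (fun x => ‖gradient pX x‖ * pW (y - x)))
    (hDom : ∀ y, ∃ ε > 0, ∃ g : EuclideanSpace ℝ (Fin d) → ℝ, Integrable g ∧
      ∀ y', dist y' y < ε → ∀ x, ‖gradient pX x‖ * pW (y' - x) ≤ g x) :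
    ∀ y, gradient (fun y' => Real.log (pY y')) y
      = ∫ x, pXgY x y • gradient (fun x' => Real.log (pX x')) x :=
  target_score_identity_general d pX pW hpX_pos hpW_pos hpX_diff hpW_diff hpX_prob hpW_prob pY hpY
    pXgY hpXgY hDom
end

section
/- Cross-term identity: for any measurable vector field s : ℝ^d → ℝ^d for which both double integrals below are absolutely convergent, ∬ ⟨s(y), ∇_y log p_{Y|X}(y|x)⟩ p_X(x) p_W(y − x) dx dy = ∬ ⟨s(y), ∇ log p_X(x)⟩ p_X(x) p_W(y − x) dx dy, where p_{Y|X}(y|x) = p_W(y − x). -/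
/-!
Multiplying the two scores by the joint density `pX x * pW (y - x)` gives `pX x • ∇pW (y - x)` and
`pW (y - x) • ∇pX x`, whose difference is minus the `x`-gradient of the joint density. Integrating
in `x` first (Fubini), the integral of the gradient of an integrable function with integrable
gradient vanishes, by integration by parts against the constant `1`.
-/

open MeasureTheory Real
open scoped RealInnerProductSpace

section Gradient

variable {E : Type*} [NormedAddCommGroup E] [InnerProductSpace ℝ E] [CompleteSpace E]
  {f g : E → ℝ} {x : E}

theorem gradient_fun_mul (hf : DifferentiableAt ℝ f x) (hg : DifferentiableAt ℝ g x) :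
    gradient (fun t => f t * g t) x = f x • gradient g x + g x • gradient f x := by
  simp [gradient, fderiv_fun_mul hf hg]

theorem gradient_log (hf : DifferentiableAt ℝ f x) (hx : f x ≠ 0) :
    gradient (fun t => log (f t)) x = (f x)⁻¹ • gradient f x := by
  simp [gradient, fderiv.log hf hx]

theorem gradient_comp_sub (a : E) :
    gradient (fun t => f (t - a)) x = gradient f (x - a) := by
  simp [gradient, fderiv_comp_sub]

theorem gradient_comp_const_sub {a : E} (hf : DifferentiableAt ℝ f (a - x)) :
    gradient (fun t => f (a - t)) x = -gradient f (a - x) := by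
  have h := (hf.hasFDerivAt.comp x ((hasFDerivAt_id x).const_sub a)).fderiv
  simp only [Function.comp_def] at h
  simp [gradient, h]

theorem smul_sub_gradient_log_eq_neg_gradient_mul {p q : E → ℝ} {y : E}
    (hp : DifferentiableAt ℝ p x) (hq : DifferentiableAt ℝ q (y - x))
    (hpx : p x ≠ 0) (hqx : q (y - x) ≠ 0) :
    (p x * q (y - x)) •
        (gradient (fun y' => log (q (y' - x))) y - gradient (fun x' => log (p x')) x) =
      -gradient (fun x' => p x' * q (y - x')) x := by
  have hq_sub : DifferentiableAt ℝ (fun y' => q (y' - x)) y := (differentiableAt_comp_sub x).2 hq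
  have hq_const_sub : DifferentiableAt ℝ (fun x' => q (y - x')) x :=
    hq.comp x (differentiableAt_id.const_sub y)
  rw [gradient_log hq_sub hqx, gradient_comp_sub, gradient_log hp hpx,
    gradient_fun_mul hp hq_const_sub, gradient_comp_const_sub hq, smul_sub, smul_smul, smul_smul,
    mul_inv_cancel_right₀ hqx, mul_comm (p x), mul_inv_cancel_right₀ hpx]
  module

end Gradient

section Integral

variable {E : Type*} [NormedAddCommGroup E] [MeasurableSpace E] [BorelSpace E]
  {μ : Measure E} [μ.IsAddHaarMeasure]

theorem integral_fderiv_apply_eq_zero [NormedSpace ℝ E] [FiniteDimensional ℝ E]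
    {F : Type*} [NormedAddCommGroup F] [NormedSpace ℝ F] {f : E → F} {v : E}
    (hf : Integrable f μ) (hf' : Integrable (fun x => fderiv ℝ f x v) μ) (hd : Differentiable ℝ f) :
    ∫ x, fderiv ℝ f x v ∂μ = 0 := by
  simpa using integral_smul_fderiv_eq_neg_fderiv_smul_of_integrable (μ := μ)
    (f := fun _ => (1 : ℝ)) (g := f) (v := v) (by simp) (by simpa using hf') (by simpa using hf)
    (fun x _ => differentiableAt_const 1) (fun x _ => hd x)

theorem integral_gradient_eq_zero [InnerProductSpace ℝ E] [FiniteDimensional ℝ E] {f : E → ℝ}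
    (hf : Integrable f μ) (hf' : Integrable (gradient f) μ) (hd : Differentiable ℝ f) :
    ∫ x, gradient f x ∂μ = 0 :=
  integral_eq_zero_of_forall_integral_inner_eq_zero ℝ _ hf' fun v => by
    simpa using integral_fderiv_apply_eq_zero hf (by simpa using hf'.const_inner (𝕜 := ℝ) v) hd

end Integral

theorem cross_term_identity_general
    (d : ℕ)
    (pX pW : EuclideanSpace ℝ (Fin d) → ℝ)
    (hpX_pos : ∀ x, 0 < pX x) (hpW_pos : ∀ w, 0 < pW w)
    (hpX_diff : ContDiff ℝ 1 pX) (hpW_diff : ContDiff ℝ 1 pW)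
    (hInt : ∀ y, Integrable (fun x => pX x * pW (y - x)))
    (hIntGrad : ∀ y, Integrable (fun x => gradient (fun x' => pX x' * pW (y - x')) x))
    (s : EuclideanSpace ℝ (Fin d) → EuclideanSpace ℝ (Fin d))
    (hconv₁ : Integrable (fun p : EuclideanSpace ℝ (Fin d) × EuclideanSpace ℝ (Fin d) =>
      ⟪s p.2, gradient (fun y' => Real.log (pW (y' - p.1))) p.2⟫ * (pX p.1 * pW (p.2 - p.1))))
    (hconv₂ : Integrable (fun p : EuclideanSpace ℝ (Fin d) × EuclideanSpace ℝ (Fin d) =>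
      ⟪s p.2, gradient (fun x' => Real.log (pX x')) p.1⟫ * (pX p.1 * pW (p.2 - p.1)))) :
    (∫ p : EuclideanSpace ℝ (Fin d) × EuclideanSpace ℝ (Fin d),
      ⟪s p.2, gradient (fun y' => Real.log (pW (y' - p.1))) p.2⟫ * (pX p.1 * pW (p.2 - p.1)))
    = ∫ p : EuclideanSpace ℝ (Fin d) × EuclideanSpace ℝ (Fin d),
      ⟪s p.2, gradient (fun x' => Real.log (pX x')) p.1⟫ * (pX p.1 * pW (p.2 - p.1)) := by
  have hpXd : Differentiable ℝ pX := hpX_diff.differentiable one_ne_zero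
  have hpWd : Differentiable ℝ pW := hpW_diff.differentiable one_ne_zero
  have hdiff : ∀ p : EuclideanSpace ℝ (Fin d) × EuclideanSpace ℝ (Fin d),
      ⟪s p.2, gradient (fun y' => log (pW (y' - p.1))) p.2⟫ * (pX p.1 * pW (p.2 - p.1))
        - ⟪s p.2, gradient (fun x' => log (pX x')) p.1⟫ * (pX p.1 * pW (p.2 - p.1))
        = -⟪s p.2, gradient (fun x' => pX x' * pW (p.2 - x')) p.1⟫ := fun ⟨x, y⟩ => by
    rw [← sub_mul, ← inner_sub_right, mul_comm, ← real_inner_smul_right,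
      smul_sub_gradient_log_eq_neg_gradient_mul (hpXd x) (hpWd _) (hpX_pos x).ne' (hpW_pos _).ne',
      inner_neg_right]
  have hint : Integrable (fun p : EuclideanSpace ℝ (Fin d) × EuclideanSpace ℝ (Fin d) =>
      ⟪s p.2, gradient (fun x' => pX x' * pW (p.2 - x')) p.1⟫) :=
    ((hconv₁.sub hconv₂).neg).congr (ae_of_all _ fun p => by simp only [Pi.neg_apply, Pi.sub_apply, hdiff p, neg_neg])
  have hinner : ∀ y, ∫ x, ⟪s y, gradient (fun x' => pX x' * pW (y - x')) x⟫ = 0 := fun y => by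
    rw [integral_inner (hIntGrad y), integral_gradient_eq_zero (hInt y) (hIntGrad y)
      (hpXd.mul (hpWd.comp ((differentiable_const y).sub differentiable_id))), inner_zero_right]
  rw [← sub_eq_zero, ← integral_sub hconv₁ hconv₂, integral_congr_ae (ae_of_all _ hdiff),
    integral_neg, neg_eq_zero, Measure.volume_eq_prod, integral_prod_symm _ hint]
  simp only [hinner, integral_zero]

/-- **Cross-term identity**: for any measurable vector field `s` for which both
double integrals are absolutely convergent,
`∬ ⟪s(y), ∇_y log p_{Y|X}(y|x)⟫ p_X(x) p_W(y-x) dx dy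
  = ∬ ⟪s(y), ∇ log p_X(x)⟫ p_X(x) p_W(y-x) dx dy`. -/
theorem cross_term_identity
    (d : ℕ) (hd : 1 ≤ d)
    (pX pW : EuclideanSpace ℝ (Fin d) → ℝ)
    (hpX_pos : ∀ x, 0 < pX x) (hpW_pos : ∀ w, 0 < pW w)
    (hpX_diff : ContDiff ℝ 1 pX) (hpW_diff : ContDiff ℝ 1 pW)
    (hpX_prob : ∫ x, pX x = 1) (hpW_prob : ∫ w, pW w = 1)
    (hInt : ∀ y, Integrable (fun x => pX x * pW (y - x)))
    (hIntGrad : ∀ y, Integrable (fun x => gradient (fun x' => pX x' * pW (y - x')) x))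
    (s : EuclideanSpace ℝ (Fin d) → EuclideanSpace ℝ (Fin d))
    (hs : Measurable s)
    (hconv₁ : Integrable (fun p : EuclideanSpace ℝ (Fin d) × EuclideanSpace ℝ (Fin d) =>
      ⟪s p.2, gradient (fun y' => Real.log (pW (y' - p.1))) p.2⟫ * (pX p.1 * pW (p.2 - p.1))))
    (hconv₂ : Integrable (fun p : EuclideanSpace ℝ (Fin d) × EuclideanSpace ℝ (Fin d) =>
      ⟪s p.2, gradient (fun x' => Real.log (pX x')) p.1⟫ * (pX p.1 * pW (p.2 - p.1)))) :
    (∫ p : EuclideanSpace ℝ (Fin d) × EuclideanSpace ℝ (Fin d),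
      ⟪s p.2, gradient (fun y' => Real.log (pW (y' - p.1))) p.2⟫ * (pX p.1 * pW (p.2 - p.1)))
    = ∫ p : EuclideanSpace ℝ (Fin d) × EuclideanSpace ℝ (Fin d),
      ⟪s p.2, gradient (fun x' => Real.log (pX x')) p.1⟫ * (pX p.1 * pW (p.2 - p.1)) :=
  cross_term_identity_general d pX pW hpX_pos hpW_pos hpX_diff hpW_diff hInt hIntGrad s hconv₁
    hconv₂
end

section
/- The score minimizes the Target Score Matching loss: for any measurable vector field s : ℝ^d → ℝ^d with all integrals below finite, ∬ ‖s(y) − ∇ log p_X(x)‖² p_X(x) p_W(y − x) dx dy = ∫ ‖s(y) − ∇ log p_Y(y)‖² p_Y(y) dy + ∬ ‖∇ log p_X(x) − ∇ log p_Y(y)‖² p_X(x) p_W(y − x) dx dy; in particular the choice s(y) = ∇ log p_Y(y) minimizes the Target Score Matching loss over all such s. -/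
/-!
Write `ρ(x, y) = p_X(x) p_W(y - x)`, `a = ∇ log p_X` and `b = ∇ log p_Y`. Expanding around `b(y)`,
`‖s(y) - a(x)‖² = ‖s(y) - b(y)‖² + 2⟪s(y) - b(y), b(y) - a(x)⟫ + ‖b(y) - a(x)‖²`.
The Target Score Identity says that `b(y)` is the mean of `a` under the weight `ρ(·, y)`, so the
cross term vanishes after integrating in `x`, while integrating the first term in `x` produces
the factor `p_Y(y)`. Minimality follows because that first summand is nonnegative.
-/

open MeasureTheory Real
open scoped InnerProductSpace

section WeightedMean

variable {X E : Type*} [MeasurableSpace X] {μ : Measure X}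
  [NormedAddCommGroup E] [NormedSpace ℝ E] {w : X → ℝ} {v : X → E}

theorem integrable_smul_of_integrable_norm_sq_mul (hw0 : 0 ≤ w) (hw : Integrable w μ)
    (hv : AEStronglyMeasurable v μ) (hv2 : Integrable (fun x => ‖v x‖ ^ 2 * w x) μ) :
    Integrable (fun x => w x • v x) μ := by
  refine ((hw.add hv2).div_const 2).mono' (hw.aestronglyMeasurable.smul hv)
    (ae_of_all _ fun x => ?_)
  have hsq := mul_nonneg (hw0 x) (sq_nonneg (‖v x‖ - 1))
  rw [norm_smul, norm_of_nonneg (hw0 x), Pi.add_apply]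
  nlinarith

theorem integral_smul_sub_eq_zero_of_eq_integral_div_smul [CompleteSpace E]
    (hw0 : 0 ≤ w) (hw : Integrable w μ) (hwv : Integrable (fun x => w x • v x) μ) {m : E}
    (hm : m = ∫ x, (w x / ∫ x', w x' ∂μ) • v x ∂μ) :
    ∫ x, w x • (m - v x) ∂μ = 0 := by
  have hmass : (∫ x, w x ∂μ) • m = ∫ x, w x • v x ∂μ := by
    rcases (integral_nonneg hw0).eq_or_lt with h | h
    · have hw_ae : w =ᵐ[μ] 0 := (integral_eq_zero_iff_of_nonneg hw0 hw).mp h.symm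
      rw [← h, zero_smul, integral_eq_zero_of_ae]
      filter_upwards [hw_ae] with x hx
      simp [hx]
    · simp_rw [hm, div_eq_inv_mul, mul_smul, integral_smul]
      exact smul_inv_smul₀ h.ne' _
  simp_rw [smul_sub]
  rw [integral_sub (hw.smul_const m) hwv, integral_smul_const, hmass, sub_self]

end WeightedMean

section Decomposition

variable {X Y E : Type*} [MeasurableSpace X] [MeasurableSpace Y] {μ : Measure X} {ν : Measure Y}
  [NormedAddCommGroup E] [InnerProductSpace ℝ E] [CompleteSpace E]
  {ρ : X → Y → ℝ} {a : X → E} {b : Y → E}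

theorem integral_inner_sub_mul_eq_zero (u : E) {m : E} {w : X → ℝ} (hw0 : 0 ≤ w)
    (hw : Integrable w μ) (ha : AEStronglyMeasurable a μ)
    (hma : Integrable (fun x => ‖m - a x‖ ^ 2 * w x) μ)
    (hm : m = ∫ x, (w x / ∫ x', w x' ∂μ) • a x ∂μ) :
    ∫ x, ⟪u, m - a x⟫_ℝ * w x ∂μ = 0 := by
  have hw_ma : Integrable (fun x => w x • (m - a x)) μ :=
    integrable_smul_of_integrable_norm_sq_mul hw0 hw (aestronglyMeasurable_const.sub ha) hma
  have hw_a : Integrable (fun x => w x • a x) μ :=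
    ((hw.smul_const m).sub hw_ma).congr
      (ae_of_all _ fun x => by simp only [Pi.sub_apply, smul_sub, sub_sub_cancel])
  calc ∫ x, ⟪u, m - a x⟫_ℝ * w x ∂μ = ∫ x, ⟪u, w x • (m - a x)⟫_ℝ ∂μ := by
        simp_rw [real_inner_smul_right, mul_comm]
    _ = ⟪u, ∫ x, w x • (m - a x) ∂μ⟫_ℝ := integral_inner hw_ma u
    _ = 0 := by
        rw [integral_smul_sub_eq_zero_of_eq_integral_div_smul hw0 hw hw_a hm, inner_zero_right]

theorem integral_prod_inner_sub_mul_eq_zero [SFinite μ] [SFinite ν] (u : Y → E)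
    (hρ0 : ∀ x y, 0 ≤ ρ x y) (ha : AEStronglyMeasurable a μ)
    (hb : ∀ y, b y = ∫ x, (ρ x y / ∫ x', ρ x' y ∂μ) • a x ∂μ)
    (hu : Integrable (fun p : X × Y => ‖u p.2‖ ^ 2 * ρ p.1 p.2) (μ.prod ν))
    (hba : Integrable (fun p : X × Y => ‖b p.2 - a p.1‖ ^ 2 * ρ p.1 p.2) (μ.prod ν))
    (hcross : Integrable (fun p : X × Y => ⟪u p.2, b p.2 - a p.1⟫_ℝ * ρ p.1 p.2) (μ.prod ν)) :
    ∫ p, ⟪u p.2, b p.2 - a p.1⟫_ℝ * ρ p.1 p.2 ∂μ.prod ν = 0 := by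
  rw [integral_prod_symm _ hcross]
  refine integral_eq_zero_of_ae ?_
  filter_upwards [hu.prod_left_ae, hba.prod_left_ae] with y huy hbay
  rcases eq_or_ne (u y) 0 with h0 | h0
  · simp [h0]
  -- where `u y ≠ 0`, integrability of `‖u y‖² ρ(·, y)` is that of the weight `ρ(·, y)`
  have hρy : Integrable (fun x => ρ x y) μ := by
    refine (huy.const_mul (‖u y‖ ^ 2)⁻¹).congr (ae_of_all _ fun x => ?_)
    have : ‖u y‖ ≠ 0 := norm_ne_zero_iff.mpr h0
    field_simp
  exact integral_inner_sub_mul_eq_zero (u y) (fun x => hρ0 x y) hρy ha hbay (hb y)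

theorem integral_prod_norm_sub_sq_mul_eq_add [SFinite μ] [SFinite ν] {s : Y → E}
    (hρ0 : ∀ x y, 0 ≤ ρ x y) (hρ : AEStronglyMeasurable (fun p : X × Y => ρ p.1 p.2) (μ.prod ν))
    (ha : AEStronglyMeasurable a μ) (hb_meas : AEStronglyMeasurable b ν)
    (hs : AEStronglyMeasurable s ν) (hb : ∀ y, b y = ∫ x, (ρ x y / ∫ x', ρ x' y ∂μ) • a x ∂μ)
    (hsa : Integrable (fun p : X × Y => ‖s p.2 - a p.1‖ ^ 2 * ρ p.1 p.2) (μ.prod ν))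
    (hba : Integrable (fun p : X × Y => ‖b p.2 - a p.1‖ ^ 2 * ρ p.1 p.2) (μ.prod ν)) :
    ∫ p, ‖s p.2 - a p.1‖ ^ 2 * ρ p.1 p.2 ∂μ.prod ν
      = ∫ y, ‖s y - b y‖ ^ 2 * ∫ x, ρ x y ∂μ ∂ν
        + ∫ p, ‖b p.2 - a p.1‖ ^ 2 * ρ p.1 p.2 ∂μ.prod ν := by
  have hsplit : ∀ p : X × Y, ‖s p.2 - a p.1‖ ^ 2 * ρ p.1 p.2
      = ‖s p.2 - b p.2‖ ^ 2 * ρ p.1 p.2 + 2 * (⟪s p.2 - b p.2, b p.2 - a p.1⟫_ℝ * ρ p.1 p.2)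
        + ‖b p.2 - a p.1‖ ^ 2 * ρ p.1 p.2 := fun p => by
    rw [← sub_add_sub_cancel (s p.2) (b p.2) (a p.1), norm_add_sq_real]
    ring
  have hsb : Integrable (fun p : X × Y => ‖s p.2 - b p.2‖ ^ 2 * ρ p.1 p.2) (μ.prod ν) := by
    refine ((hsa.const_mul 2).add (hba.const_mul 2)).mono'
      (((hs.comp_snd.sub hb_meas.comp_snd).norm.pow 2).mul hρ) (ae_of_all _ fun p => ?_)
    have htri : ‖s p.2 - b p.2‖ ≤ ‖s p.2 - a p.1‖ + ‖b p.2 - a p.1‖ := by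
      simpa only [norm_sub_rev (a p.1)] using
        norm_sub_le_norm_sub_add_norm_sub (s p.2) (a p.1) (b p.2)
    have hsq := (pow_le_pow_left₀ (norm_nonneg _) htri 2).trans add_sq_le
    rw [Pi.add_apply, norm_of_nonneg (mul_nonneg (sq_nonneg _) (hρ0 p.1 p.2))]
    nlinarith [mul_le_mul_of_nonneg_right hsq (hρ0 p.1 p.2)]
  have hcross : Integrable (fun p : X × Y => ⟪s p.2 - b p.2, b p.2 - a p.1⟫_ℝ * ρ p.1 p.2)
      (μ.prod ν) :=
    (((hsa.sub hsb).sub hba).div_const 2).congr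
      (ae_of_all _ fun p => by simp only [Pi.sub_apply, hsplit p]; ring)
  have hcross0 : ∫ p, ⟪s p.2 - b p.2, b p.2 - a p.1⟫_ℝ * ρ p.1 p.2 ∂μ.prod ν = 0 :=
    integral_prod_inner_sub_mul_eq_zero (fun y => s y - b y) hρ0 ha hb hsb hba hcross
  rw [integral_congr_ae (ae_of_all _ hsplit), integral_add ?_ hba,
    integral_add hsb (hcross.const_mul 2), integral_const_mul, hcross0, mul_zero, add_zero,
    integral_prod_symm _ hsb]
  · simp_rw [integral_const_mul]
  · exact hsb.add (hcross.const_mul 2)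

end Decomposition

theorem measurable_gradient {F : Type*} [NormedAddCommGroup F] [InnerProductSpace ℝ F]
    [CompleteSpace F] [MeasurableSpace F] [BorelSpace F] (f : F → ℝ) :
    Measurable (gradient f) :=
  (InnerProductSpace.toDual ℝ F).symm.continuous.measurable.comp (measurable_fderiv ℝ f)

theorem score_minimizes_tsm_general
    (d : ℕ)
    (pX pW : EuclideanSpace ℝ (Fin d) → ℝ)
    (hpX_pos : ∀ x, 0 < pX x) (hpW_pos : ∀ w, 0 < pW w)
    (hpX_diff : ContDiff ℝ 1 pX) (hpW_diff : ContDiff ℝ 1 pW)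
    (pY : EuclideanSpace ℝ (Fin d) → ℝ)
    (hpY : ∀ y, pY y = ∫ x, pX x * pW (y - x))
    (pXgY : EuclideanSpace ℝ (Fin d) → EuclideanSpace ℝ (Fin d) → ℝ)
    (hpXgY : ∀ x y, pXgY x y = pX x * pW (y - x) / pY y)
    -- Target Score Identity, assumed to hold (differentiation under the integral sign)
    (hTSI : ∀ y, gradient (fun y' => Real.log (pY y')) y
      = ∫ x, pXgY x y • gradient (fun x' => Real.log (pX x')) x)
    (s : EuclideanSpace ℝ (Fin d) → EuclideanSpace ℝ (Fin d))
    (hs : Measurable s)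
    (hTSM : Integrable (fun p : EuclideanSpace ℝ (Fin d) × EuclideanSpace ℝ (Fin d) =>
      ‖s p.2 - gradient (fun x' => Real.log (pX x')) p.1‖ ^ 2 * (pX p.1 * pW (p.2 - p.1))))
    (hTSMscore : Integrable (fun p : EuclideanSpace ℝ (Fin d) × EuclideanSpace ℝ (Fin d) =>
      ‖gradient (fun y' => Real.log (pY y')) p.2
        - gradient (fun x' => Real.log (pX x')) p.1‖ ^ 2 * (pX p.1 * pW (p.2 - p.1)))) :
    (∫ p : EuclideanSpace ℝ (Fin d) × EuclideanSpace ℝ (Fin d),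
        ‖s p.2 - gradient (fun x' => Real.log (pX x')) p.1‖ ^ 2 * (pX p.1 * pW (p.2 - p.1)))
      = (∫ y, ‖s y - gradient (fun y' => Real.log (pY y')) y‖ ^ 2 * pY y)
        + (∫ p : EuclideanSpace ℝ (Fin d) × EuclideanSpace ℝ (Fin d),
            ‖gradient (fun x' => Real.log (pX x')) p.1
              - gradient (fun y' => Real.log (pY y')) p.2‖ ^ 2 * (pX p.1 * pW (p.2 - p.1)))
    ∧ (∫ p : EuclideanSpace ℝ (Fin d) × EuclideanSpace ℝ (Fin d),
        ‖gradient (fun y' => Real.log (pY y')) p.2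
          - gradient (fun x' => Real.log (pX x')) p.1‖ ^ 2 * (pX p.1 * pW (p.2 - p.1)))
      ≤ ∫ p : EuclideanSpace ℝ (Fin d) × EuclideanSpace ℝ (Fin d),
          ‖s p.2 - gradient (fun x' => Real.log (pX x')) p.1‖ ^ 2 * (pX p.1 * pW (p.2 - p.1)) := by
  have hρ_cont : Continuous fun p : EuclideanSpace ℝ (Fin d) × EuclideanSpace ℝ (Fin d) =>
      pX p.1 * pW (p.2 - p.1) :=
    (hpX_diff.continuous.comp continuous_fst).mul
      (hpW_diff.continuous.comp (continuous_snd.sub continuous_fst))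
  have hposterior : ∀ y, gradient (fun y' => Real.log (pY y')) y
      = ∫ x, (pX x * pW (y - x) / ∫ x', pX x' * pW (y - x'))
          • gradient (fun x' => Real.log (pX x')) x := by
    intro y
    simp only [hTSI y, hpXgY, hpY y]
  have hdecomp := integral_prod_norm_sub_sq_mul_eq_add
    (fun x y => (mul_pos (hpX_pos x) (hpW_pos (y - x))).le) hρ_cont.aestronglyMeasurable
    (measurable_gradient _).aestronglyMeasurable (measurable_gradient _).aestronglyMeasurable
    hs.aestronglyMeasurable hposterior hTSM hTSMscore
  simp only [← Measure.volume_eq_prod, ← hpY] at hdecomp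
  have hpY_nonneg : ∀ y, 0 ≤ pY y := fun y =>
    hpY y ▸ integral_nonneg fun x => (mul_pos (hpX_pos x) (hpW_pos (y - x))).le
  refine ⟨?_, ?_⟩
  · simp only [hdecomp, norm_sub_rev (gradient (fun x' => Real.log (pX x')) _)]
  · rw [hdecomp]
    exact le_add_of_nonneg_left
      (integral_nonneg fun y => mul_nonneg (sq_nonneg _) (hpY_nonneg y))

/-- **The score minimizes the TSM loss**: the TSM loss decomposes as
`ℓ_TSM(s) = ∫ ‖s(y) - ∇ log p_Y(y)‖² p_Y(y) dy
  + ∬ ‖∇ log p_X(x) - ∇ log p_Y(y)‖² p_X(x) p_W(y-x) dx dy`,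
and in particular `s = ∇ log p_Y` minimizes the TSM loss. -/
theorem score_minimizes_tsm
    (d : ℕ) (hd : 1 ≤ d)
    (pX pW : EuclideanSpace ℝ (Fin d) → ℝ)
    (hpX_pos : ∀ x, 0 < pX x) (hpW_pos : ∀ w, 0 < pW w)
    (hpX_diff : ContDiff ℝ 1 pX) (hpW_diff : ContDiff ℝ 1 pW)
    (hpX_prob : ∫ x, pX x = 1) (hpW_prob : ∫ w, pW w = 1)
    (pY : EuclideanSpace ℝ (Fin d) → ℝ)
    (hpY : ∀ y, pY y = ∫ x, pX x * pW (y - x))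
    (pXgY : EuclideanSpace ℝ (Fin d) → EuclideanSpace ℝ (Fin d) → ℝ)
    (hpXgY : ∀ x y, pXgY x y = pX x * pW (y - x) / pY y)
    -- Target Score Identity, assumed to hold (differentiation under the integral sign)
    (hTSI : ∀ y, gradient (fun y' => Real.log (pY y')) y
      = ∫ x, pXgY x y • gradient (fun x' => Real.log (pX x')) x)
    (s : EuclideanSpace ℝ (Fin d) → EuclideanSpace ℝ (Fin d))
    (hs : Measurable s)
    (hTSM : Integrable (fun p : EuclideanSpace ℝ (Fin d) × EuclideanSpace ℝ (Fin d) =>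
      ‖s p.2 - gradient (fun x' => Real.log (pX x')) p.1‖ ^ 2 * (pX p.1 * pW (p.2 - p.1))))
    (hL2 : Integrable (fun y =>
      ‖s y - gradient (fun y' => Real.log (pY y')) y‖ ^ 2 * pY y))
    (hVar : Integrable (fun p : EuclideanSpace ℝ (Fin d) × EuclideanSpace ℝ (Fin d) =>
      ‖gradient (fun x' => Real.log (pX x')) p.1
        - gradient (fun y' => Real.log (pY y')) p.2‖ ^ 2 * (pX p.1 * pW (p.2 - p.1))))
    (hTSMscore : Integrable (fun p : EuclideanSpace ℝ (Fin d) × EuclideanSpace ℝ (Fin d) =>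
      ‖gradient (fun y' => Real.log (pY y')) p.2
        - gradient (fun x' => Real.log (pX x')) p.1‖ ^ 2 * (pX p.1 * pW (p.2 - p.1)))) :
    (∫ p : EuclideanSpace ℝ (Fin d) × EuclideanSpace ℝ (Fin d),
        ‖s p.2 - gradient (fun x' => Real.log (pX x')) p.1‖ ^ 2 * (pX p.1 * pW (p.2 - p.1)))
      = (∫ y, ‖s y - gradient (fun y' => Real.log (pY y')) y‖ ^ 2 * pY y)
        + (∫ p : EuclideanSpace ℝ (Fin d) × EuclideanSpace ℝ (Fin d),
            ‖gradient (fun x' => Real.log (pX x')) p.1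
              - gradient (fun y' => Real.log (pY y')) p.2‖ ^ 2 * (pX p.1 * pW (p.2 - p.1)))
    ∧ (∫ p : EuclideanSpace ℝ (Fin d) × EuclideanSpace ℝ (Fin d),
        ‖gradient (fun y' => Real.log (pY y')) p.2
          - gradient (fun x' => Real.log (pX x')) p.1‖ ^ 2 * (pX p.1 * pW (p.2 - p.1)))
      ≤ ∫ p : EuclideanSpace ℝ (Fin d) × EuclideanSpace ℝ (Fin d),
          ‖s p.2 - gradient (fun x' => Real.log (pX x')) p.1‖ ^ 2 * (pX p.1 * pW (p.2 - p.1)) :=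
  score_minimizes_tsm_general d pX pW hpX_pos hpW_pos hpX_diff hpW_diff pY hpY pXgY hpXgY hTSI s hs
    hTSM hTSMscore
end

section
/- Zero-variance optimal convex combination in the Gaussian case: set κ = σ² / (σ² + α² σ_tar²). Then for all x, y ∈ ℝ^d one has the pointwise identity κ · (αx − y)/σ² + (1 − κ) · ( −x/(α σ_tar²) ) = −y / (α² σ_tar² + σ²); in particular, since p_Y = N(0, (α² σ_tar² + σ²) I_d) and hence ∇ log p_Y(y) = −y/(α² σ_tar² + σ²), the κ-mixture of the DSI and TSI integrands equals ∇ log p_Y(y) exactly for every x, so the corresponding Monte Carlo estimator of the score has zero variance. -/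
open MeasureTheory Real

/-- **Zero-variance optimal convex combination in the Gaussian case**:
with `κ = σ²/(σ² + α²σ_tar²)`, for all `x, y`:
`κ (αx - y)/σ² + (1-κ)(-x/(ασ_tar²)) = -y/(α²σ_tar² + σ²)`;
moreover, since `p_Y = N(0, (α²σ_tar² + σ²) I)`, its score is
`∇ log p_Y(y) = -y/(α²σ_tar² + σ²)`, so the κ-mixture of the DSI and TSI
integrands equals the score exactly (zero-variance estimator). -/
theorem zero_variance_mixture_gaussian
    (d : ℕ) (hd : 1 ≤ d) (α σ σtar : ℝ) (hα : 0 < α) (hσ : 0 < σ) (hσtar : 0 < σtar)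
    (κ : ℝ) (hκ : κ = σ ^ 2 / (σ ^ 2 + α ^ 2 * σtar ^ 2))
    (pY : EuclideanSpace ℝ (Fin d) → ℝ)
    (hpY : ∀ y, pY y = (2 * π * (α ^ 2 * σtar ^ 2 + σ ^ 2)) ^ (-(d : ℝ) / 2)
      * Real.exp (-‖y‖ ^ 2 / (2 * (α ^ 2 * σtar ^ 2 + σ ^ 2)))) :
    (∀ x y : EuclideanSpace ℝ (Fin d),
      κ • ((σ ^ 2)⁻¹ • (α • x - y)) + (1 - κ) • (-(α * σtar ^ 2)⁻¹ • x)
        = -(α ^ 2 * σtar ^ 2 + σ ^ 2)⁻¹ • y)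
    ∧ (∀ y : EuclideanSpace ℝ (Fin d),
      gradient (fun y' => Real.log (pY y')) y
        = -(α ^ 2 * σtar ^ 2 + σ ^ 2)⁻¹ • y) := by
  have hα' : α ≠ 0 := ne_of_gt hα
  have hσ' : σ ≠ 0 := ne_of_gt hσ
  have hσtar' : σtar ≠ 0 := ne_of_gt hσtar
  have hs : (0:ℝ) < α ^ 2 * σtar ^ 2 + σ ^ 2 := by positivity
  have hs' : α ^ 2 * σtar ^ 2 + σ ^ 2 ≠ 0 := ne_of_gt hs
  have hs2 : σ ^ 2 + α ^ 2 * σtar ^ 2 ≠ 0 := by positivity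
  constructor
  · intro x y
    subst hκ
    match_scalars
    · field_simp
      ring
    · field_simp
      ring
  · intro y
    set s : ℝ := α ^ 2 * σtar ^ 2 + σ ^ 2 with hsdef
    have hC : (0:ℝ) < (2 * π * s) ^ (-(d : ℝ) / 2) := by
      apply Real.rpow_pos_of_pos
      positivity
    have hfun : (fun y' : EuclideanSpace ℝ (Fin d) => Real.log (pY y'))
        = fun y' => Real.log ((2 * π * s) ^ (-(d : ℝ) / 2))
            + (-(2 * s)⁻¹) * ‖y'‖ ^ 2 := by
      funext y'
      rw [hpY y', Real.log_mul (ne_of_gt hC) (Real.exp_ne_zero _), Real.log_exp]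
      ring
    rw [hfun]
    have hF : HasFDerivAt
        (fun y' : EuclideanSpace ℝ (Fin d) => Real.log ((2 * π * s) ^ (-(d : ℝ) / 2))
            + (-(2 * s)⁻¹) * ‖y'‖ ^ 2)
        ((-(2 * s)⁻¹) • (2 • (innerSL ℝ y))) y := by
      have h1 : HasFDerivAt (fun y' : EuclideanSpace ℝ (Fin d) => ‖y'‖ ^ 2)
          (2 • (innerSL ℝ y)) y := by
        simpa using (hasFDerivAt_id y).norm_sq
      exact (h1.const_mul _).const_add _
    have hdual : ((-(2 * s)⁻¹) • (2 • (innerSL ℝ y)))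
        = InnerProductSpace.toDual ℝ (EuclideanSpace ℝ (Fin d)) (-(s⁻¹) • y) := by
      ext w
      simp [InnerProductSpace.toDual_apply_apply, real_inner_smul_left]
      field_simp
    rw [hdual] at hF
    exact (hasGradientAt_iff_hasFDerivAt.mpr hF).gradient
end
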